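/- For σ ∈ (0,1], the function Ψ_σ(s) = (1/√(2π))·∫_0^1 e^{-s²y²/2}/(1+σ²y²) dy takes values in [0, 1/√(2π)] for every real s, and for every integer n ≥ 1 its n-th derivative satisfies |Ψ_σ^{(n)}(s)| ≤ n^{n/2} for every real s. -/

import Mathlib

/-!
Writing `Ψ_σ(s) = (2π)^{-1/2} M(-s²/2)`, where `M` is the moment generating function of `y ↦ y²`
under the measure `dy / (1 + σ²y²)` on `(0, 1]`, exhibits `Ψ_σ` as the restriction to `ℝ` of an
entire function `Ψ̃` with `|Ψ̃(z)| ≤ (2π)^{-1/2} exp((Im z)²/2)`, because `y² ∈ [0, 1]` and the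
measure has mass at most `1`. Cauchy's estimate on the circle of radius `√n` around `s` bounds
`|Ψ_σ^{(n)}(s)|` by `n! e^{n/2} / (√(2π) n^{n/2})`, which is at most `n^{n/2}` by the
Stirling-type bound `n! ≤ e √n (n/e)^n`.
-/

noncomputable def PsiFn (σ s : ℝ) : ℝ :=
  (Real.sqrt (2 * Real.pi))⁻¹ * ∫ y in (0:ℝ)..1, Real.exp (-s ^ 2 * y ^ 2 / 2) / (1 + σ ^ 2 * y ^ 2)

open MeasureTheory ProbabilityTheory Real
open scoped Nat

section BoundedMGF

variable {Ω : Type*} {m : MeasurableSpace Ω} {μ : Measure Ω} {X : Ω → ℝ}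

lemma integrableExpSet_eq_univ_of_ae_abs_le [IsFiniteMeasure μ] (hX : AEMeasurable X μ) {C : ℝ}
    (hC : ∀ᵐ ω ∂μ, |X ω| ≤ C) : integrableExpSet X μ = Set.univ := by
  refine Set.eq_univ_of_forall fun t => Integrable.of_bound
    (measurable_exp.comp_aemeasurable (hX.const_mul t)).aestronglyMeasurable (exp (|t| * C)) ?_
  filter_upwards [hC] with ω hω
  rw [norm_of_nonneg (exp_nonneg _), exp_le_exp]
  calc t * X ω ≤ |t * X ω| := le_abs_self _
    _ = |t| * |X ω| := abs_mul t (X ω)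
    _ ≤ |t| * C := mul_le_mul_of_nonneg_left hω (abs_nonneg t)

lemma mgf_le_of_ae_mem_Icc [IsFiniteMeasure μ] (hX : ∀ᵐ ω ∂μ, X ω ∈ Set.Icc 0 1) {t T : ℝ}
    (htT : t ≤ T) (hT : 0 ≤ T) : mgf X μ t ≤ μ.real Set.univ * exp T := by
  calc mgf X μ t ≤ ∫ _, exp T ∂μ := by
        refine integral_mono_of_nonneg (ae_of_all _ fun ω => exp_nonneg _) (integrable_const _) ?_
        filter_upwards [hX] with ω ⟨h0, h1⟩
        refine exp_le_exp.2 ?_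
        rcases le_total t 0 with ht | ht <;> nlinarith
    _ = μ.real Set.univ * exp T := by rw [integral_const, smul_eq_mul]

lemma norm_complexMGF_le_of_ae_mem_Icc [IsFiniteMeasure μ] (hX : ∀ᵐ ω ∂μ, X ω ∈ Set.Icc 0 1)
    {z : ℂ} {T : ℝ} (hzT : z.re ≤ T) (hT : 0 ≤ T) :
    ‖complexMGF X μ z‖ ≤ μ.real Set.univ * exp T :=
  norm_complexMGF_le_mgf.trans (mgf_le_of_ae_mem_Icc hX hzT hT)

lemma differentiable_complexMGF_of_integrableExpSet_eq_univ
    (hX : integrableExpSet X μ = Set.univ) : Differentiable ℂ (complexMGF X μ) := by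
  rw [← differentiableOn_univ]
  simpa [hX] using differentiableOn_complexMGF (X := X) (μ := μ)

end BoundedMGF

lemma one_le_one_add_sq_mul_sq (σ y : ℝ) : 1 ≤ 1 + σ ^ 2 * y ^ 2 := by
  nlinarith [sq_nonneg (σ * y)]

noncomputable def psiMeasure (σ : ℝ) : Measure ℝ :=
  (volume.restrict (Set.Ioc 0 1)).withDensity fun y => ENNReal.ofReal (1 + σ ^ 2 * y ^ 2)⁻¹

lemma psiMeasure_univ_le_one (σ : ℝ) : psiMeasure σ Set.univ ≤ 1 := by
  rw [psiMeasure, withDensity_apply _ MeasurableSet.univ, Measure.restrict_univ]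
  calc ∫⁻ y in Set.Ioc 0 1, ENNReal.ofReal (1 + σ ^ 2 * y ^ 2)⁻¹
      ≤ ∫⁻ _ in Set.Ioc (0 : ℝ) 1, 1 :=
        lintegral_mono fun y =>
          ENNReal.ofReal_le_one.2 (inv_le_one_of_one_le₀ (one_le_one_add_sq_mul_sq σ y))
    _ = 1 := by simp

instance (σ : ℝ) : IsFiniteMeasure (psiMeasure σ) :=
  ⟨(psiMeasure_univ_le_one σ).trans_lt ENNReal.one_lt_top⟩

lemma psiMeasure_real_univ_le_one (σ : ℝ) : (psiMeasure σ).real Set.univ ≤ 1 :=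
  ENNReal.toReal_le_of_le_ofReal zero_le_one (by simpa using psiMeasure_univ_le_one σ)

lemma ae_sq_mem_Icc_psiMeasure (σ : ℝ) : ∀ᵐ y ∂psiMeasure σ, y ^ 2 ∈ Set.Icc (0 : ℝ) 1 := by
  have : ∀ᵐ y ∂psiMeasure σ, y ∈ Set.Ioc (0 : ℝ) 1 :=
    withDensity_absolutelyContinuous _ _ (ae_restrict_mem measurableSet_Ioc)
  filter_upwards [this] with y ⟨h0, h1⟩
  exact ⟨sq_nonneg y, pow_le_one₀ h0.le h1⟩

lemma integrableExpSet_psiMeasure (σ : ℝ) :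
    integrableExpSet (fun y => y ^ 2) (psiMeasure σ) = Set.univ :=
  integrableExpSet_eq_univ_of_ae_abs_le (by fun_prop) <|
    (ae_sq_mem_Icc_psiMeasure σ).mono fun _ hy => abs_le.2 ⟨by linarith [hy.1], hy.2⟩

lemma psiFn_eq_mgf (σ s : ℝ) :
    PsiFn σ s = (√(2 * π))⁻¹ * mgf (fun y => y ^ 2) (psiMeasure σ) (-s ^ 2 / 2) := by
  rw [PsiFn, mgf, psiMeasure, integral_withDensity_eq_integral_toReal_smul (by fun_prop)
      (ae_of_all _ fun _ => ENNReal.ofReal_lt_top),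
    intervalIntegral.integral_of_le zero_le_one]
  congr 1
  refine integral_congr_ae (ae_of_all _ fun y => ?_)
  have hden := one_le_one_add_sq_mul_sq σ y
  simp only [smul_eq_mul]
  rw [ENNReal.toReal_ofReal (by positivity)]
  field_simp

lemma psiFn_mem_Icc (σ s : ℝ) : PsiFn σ s ∈ Set.Icc 0 (√(2 * π))⁻¹ := by
  have hmgf : mgf (fun y => y ^ 2) (psiMeasure σ) (-s ^ 2 / 2) ≤ 1 := by
    have h := mgf_le_of_ae_mem_Icc (ae_sq_mem_Icc_psiMeasure σ)
      (by nlinarith [sq_nonneg s] : -s ^ 2 / 2 ≤ 0) le_rfl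
    rw [exp_zero, mul_one] at h
    exact h.trans (psiMeasure_real_univ_le_one σ)
  rw [psiFn_eq_mgf]
  exact ⟨mul_nonneg (by positivity) mgf_nonneg, mul_le_of_le_one_right (by positivity) hmgf⟩

lemma iteratedDeriv_eq_re_iteratedDeriv_of_ofReal {f : ℂ → ℂ} {g : ℝ → ℝ}
    (hf : Differentiable ℂ f) (hfg : ∀ x : ℝ, f x = g x) (n : ℕ) (x : ℝ) :
    iteratedDeriv n g x = (iteratedDeriv n f x).re := by
  induction n generalizing x with
  | zero => simp [hfg]
  | succ n ih =>
    rw [iteratedDeriv_succ, iteratedDeriv_succ, show iteratedDeriv n g = _ from funext ih]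
    exact ((hf.contDiff.differentiable_iteratedDeriv' n x).hasDerivAt.real_of_complex).deriv

noncomputable def psiC (σ : ℝ) (z : ℂ) : ℂ :=
  (√(2 * π) : ℂ)⁻¹ * complexMGF (fun y => y ^ 2) (psiMeasure σ) (-z ^ 2 / 2)

lemma differentiable_psiC (σ : ℝ) : Differentiable ℂ (psiC σ) :=
  ((differentiable_complexMGF_of_integrableExpSet_eq_univ (integrableExpSet_psiMeasure σ)).comp
    (by fun_prop)).const_mul _

lemma psiC_ofReal (σ s : ℝ) : psiC σ s = PsiFn σ s := by
  rw [psiC, psiFn_eq_mgf, show -(s : ℂ) ^ 2 / 2 = ((-s ^ 2 / 2 : ℝ) : ℂ) by push_cast; ring,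
    complexMGF_ofReal]
  push_cast; rfl

lemma norm_psiC_le (σ : ℝ) {z : ℂ} {R : ℝ} (hR : |z.im| ≤ R) :
    ‖psiC σ z‖ ≤ (√(2 * π))⁻¹ * exp (R ^ 2 / 2) := by
  have hre : (-z ^ 2 / 2).re ≤ R ^ 2 / 2 := by
    have hsq : (-z ^ 2 / 2).re = (z.im ^ 2 - z.re ^ 2) / 2 := by simp [sq]
    rw [hsq]
    nlinarith [sq_nonneg z.re, sq_le_sq' (abs_le.1 hR).1 (abs_le.1 hR).2]
  rw [psiC, norm_mul, norm_inv, Complex.norm_real, norm_of_nonneg (sqrt_nonneg _)]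
  gcongr
  calc _ ≤ (psiMeasure σ).real Set.univ * exp (R ^ 2 / 2) :=
        norm_complexMGF_le_of_ae_mem_Icc (ae_sq_mem_Icc_psiMeasure σ) hre (by positivity)
    _ ≤ exp (R ^ 2 / 2) := mul_le_of_le_one_left (exp_nonneg _) (psiMeasure_real_univ_le_one σ)

lemma norm_psiC_le_of_mem_sphere (σ : ℝ) {s R : ℝ} {z : ℂ} (hz : z ∈ Metric.sphere (s : ℂ) R) :
    ‖psiC σ z‖ ≤ (√(2 * π))⁻¹ * exp (R ^ 2 / 2) := by
  refine norm_psiC_le σ ?_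
  simpa [← mem_sphere_iff_norm.1 hz] using Complex.abs_im_le_norm (z - s)

lemma factorial_le_exp_one_mul_sqrt_mul_pow {n : ℕ} (hn : n ≠ 0) :
    (n ! : ℝ) ≤ exp 1 * √n * (n / exp 1) ^ n := by
  obtain ⟨m, rfl⟩ := Nat.exists_eq_add_one_of_ne_zero hn
  have h : Stirling.stirlingSeq (m + 1) ≤ exp 1 / √2 := by
    simpa [Stirling.stirlingSeq_one] using Stirling.stirlingSeq'_antitone (Nat.zero_le m)
  rw [Stirling.stirlingSeq, div_le_div_iff₀ (by positivity) (by positivity),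
    sqrt_mul zero_le_two] at h
  refine le_of_mul_le_mul_right ?_ (sqrt_pos.2 (zero_lt_two : (0 : ℝ) < 2))
  linarith

lemma exp_one_mul_sqrt_le (x : ℝ) : exp 1 * √x ≤ √(2 * π) * exp (x / 2) := by
  have hex : exp 1 * x ≤ exp x := by
    simpa [← exp_add] using mul_le_mul_of_nonneg_left (add_one_le_exp (x - 1)) (exp_pos 1).le
  have he : exp 1 ≤ 2 * π := by linarith [exp_one_lt_d9, pi_gt_three]
  rw [← sqrt_sq (exp_pos 1).le, ← sqrt_mul (sq_nonneg _), exp_half, ← sqrt_mul (by positivity)]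
  refine sqrt_le_sqrt ?_
  calc exp 1 ^ 2 * x = exp 1 * (exp 1 * x) := by ring
    _ ≤ exp 1 * exp x := by gcongr
    _ ≤ 2 * π * exp x := by gcongr

lemma factorial_mul_exp_half_le {n : ℕ} (hn : n ≠ 0) :
    (n ! : ℝ) * exp (n / 2) ≤ √(2 * π) * n ^ n := by
  have hsplit : exp (n : ℝ) = exp (n / 2) * exp (n / 2) := by rw [← exp_add, add_halves]
  calc (n ! : ℝ) * exp (n / 2) ≤ exp 1 * √n * (n / exp 1) ^ n * exp (n / 2) := by
        gcongr; exact factorial_le_exp_one_mul_sqrt_mul_pow hn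
    _ = exp 1 * √n * n ^ n / exp (n / 2) := by
        rw [div_pow, ← exp_nat_mul, mul_one, hsplit]; field_simp
    _ ≤ √(2 * π) * exp (n / 2) * n ^ n / exp (n / 2) := by
        gcongr ?_ * _ / _; exact exp_one_mul_sqrt_le n
    _ = √(2 * π) * n ^ n := by field_simp

lemma factorial_mul_div_sqrt_pow_le {n : ℕ} (hn : n ≠ 0) :
    n ! * ((√(2 * π))⁻¹ * exp (n / 2)) / √n ^ n ≤ (n : ℝ) ^ ((n : ℝ) / 2) := by
  have hpow : √n ^ n = (n : ℝ) ^ ((n : ℝ) / 2) := by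
    rw [sqrt_eq_rpow, ← rpow_natCast, ← rpow_mul n.cast_nonneg, one_div_mul_eq_div]
  have hsq : (√n ^ n) ^ 2 = (n : ℝ) ^ n := by
    rw [← pow_mul, mul_comm, pow_mul, sq_sqrt n.cast_nonneg]
  rw [← hpow, div_le_iff₀ (by positivity), ← sq, hsq, ← mul_assoc, mul_comm _ (√(2 * π))⁻¹,
    mul_assoc, inv_mul_le_iff₀ (by positivity)]
  exact factorial_mul_exp_half_le hn

theorem stmt14_general (σ : ℝ) :
    (∀ s : ℝ, PsiFn σ s ∈ Set.Icc (0:ℝ) ((Real.sqrt (2 * Real.pi))⁻¹)) ∧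
    (∀ n : ℕ, 1 ≤ n → ∀ s : ℝ, |iteratedDeriv n (PsiFn σ) s| ≤ (n : ℝ) ^ ((n : ℝ) / 2)) := by
  refine ⟨psiFn_mem_Icc σ, fun n hn s => ?_⟩
  have hn0 : n ≠ 0 := by omega
  have hR : 0 < √n := sqrt_pos.2 (by exact_mod_cast Nat.pos_of_ne_zero hn0)
  have hsphere : ∀ z ∈ Metric.sphere (s : ℂ) √n, ‖psiC σ z‖ ≤ (√(2 * π))⁻¹ * exp (n / 2) :=
    fun z hz => by simpa [sq_sqrt n.cast_nonneg] using norm_psiC_le_of_mem_sphere σ hz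
  calc |iteratedDeriv n (PsiFn σ) s| = |(iteratedDeriv n (psiC σ) s).re| := by
        rw [iteratedDeriv_eq_re_iteratedDeriv_of_ofReal (differentiable_psiC σ) (psiC_ofReal σ)]
    _ ≤ ‖iteratedDeriv n (psiC σ) s‖ := Complex.abs_re_le_norm _
    _ ≤ n ! * ((√(2 * π))⁻¹ * exp (n / 2)) / √n ^ n :=
        Complex.norm_iteratedDeriv_le_of_forall_mem_sphere_norm_le n hR
          (differentiable_psiC σ).diffContOnCl hsphere
    _ ≤ (n : ℝ) ^ ((n : ℝ) / 2) := factorial_mul_div_sqrt_pow_le hn0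

theorem stmt14 (σ : ℝ) (hσ : σ ∈ Set.Ioc (0:ℝ) 1) :
    (∀ s : ℝ, PsiFn σ s ∈ Set.Icc (0:ℝ) ((Real.sqrt (2 * Real.pi))⁻¹)) ∧
    (∀ n : ℕ, 1 ≤ n → ∀ s : ℝ, |iteratedDeriv n (PsiFn σ) s| ≤ (n : ℝ) ^ ((n : ℝ) / 2)) :=
  stmt14_general σ
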